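/- T¹ norm of an atom is at most one (Hilbert-valued case). Let H be a separable Hilbert space and let a : ℝⁿ × (0,∞) → H be strongly measurable, vanishing outside the tent B̂ over some open ball B ⊆ ℝⁿ, and satisfying ∫_B ∫_{Γ(x)} ‖a(y,t)‖² dμ(y,t) dx ≤ 1/|B|. Then ∫_{ℝⁿ} ( ∫_{Γ(x)} ‖a(y,t)‖² dμ(y,t) )^{1/2} dx ≤ 1. (In particular, ∫_{Γ(x)} ‖a‖² dμ = 0 for almost every x outside B.) -/

import Mathlib

/-!
For `x ∉ B` every point `(y, t)` of the cone `Γ(x)` has `x ∈ B(y, t)`, so `B(y, t) ⊄ B` and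
`a` vanishes on `Γ(x)`. Hence the square function of `a` is supported in `B`, and Cauchy–Schwarz
on `B` bounds its integral by `(∫_B ∫_{Γ(x)} ‖a‖² dμ dx)^{1/2} |B|^{1/2} ≤ 1`.
-/

open MeasureTheory ENNReal Metric Set

noncomputable section

/-- The cone `Γ(x) = {(y,t) : ‖x - y‖ < t}` in the upper half-space. -/
def cone (n : ℕ) (x : EuclideanSpace ℝ (Fin n)) : Set (EuclideanSpace ℝ (Fin n) × ℝ) :=
  {p | dist x p.1 < p.2}

/-- The tent `Ê = {(y,t) : t > 0, B(y,t) ⊆ E}` over a set `E ⊆ ℝⁿ`. -/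
def tent (n : ℕ) (E : Set (EuclideanSpace ℝ (Fin n))) : Set (EuclideanSpace ℝ (Fin n) × ℝ) :=
  {p | 0 < p.2 ∧ Metric.ball p.1 p.2 ⊆ E}

/-- The measure `dμ(y,t) = dy dt / t^(n+1)` on the upper half-space. -/
def muT (n : ℕ) : Measure (EuclideanSpace ℝ (Fin n) × ℝ) :=
  (volume.restrict {p : EuclideanSpace ℝ (Fin n) × ℝ | 0 < p.2}).withDensity
    fun p => ENNReal.ofReal (p.2 ^ (-(n + 1 : ℝ)))

theorem lintegral_rpow_half_le {α : Type*} [MeasurableSpace α] (μ : Measure α)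
    (f : α → ℝ≥0∞) :
    ∫⁻ x, f x ^ (1 / 2 : ℝ) ∂μ ≤ (∫⁻ x, f x ∂μ) ^ (1 / 2 : ℝ) * μ univ ^ (1 / 2 : ℝ) := by
  -- Hölder needs measurability, so pass to a measurable minorant with the same integral.
  obtain ⟨φ, hφ, hφf, hφ_int⟩ := exists_measurable_le_lintegral_eq μ fun x ↦ f x ^ (1 / 2 : ℝ)
  have hφ_sq : ∀ x, φ x ^ (2 : ℝ) ≤ f x := fun x ↦ by
    simpa only [one_div, ENNReal.rpow_inv_rpow two_ne_zero] using
      ENNReal.rpow_le_rpow (hφf x) zero_le_two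
  calc ∫⁻ x, f x ^ (1 / 2 : ℝ) ∂μ
      = ∫⁻ x, (φ x ^ (2 : ℝ)) ^ (1 / 2 : ℝ) * 1 ^ (1 / 2 : ℝ) ∂μ := by
        rw [hφ_int]
        simp only [one_div, ENNReal.rpow_rpow_inv two_ne_zero, one_rpow, mul_one]
    _ ≤ (∫⁻ x, φ x ^ (2 : ℝ) ∂μ) ^ (1 / 2 : ℝ) * (∫⁻ _, 1 ∂μ) ^ (1 / 2 : ℝ) :=
        lintegral_mul_norm_pow_le (hφ.pow_const _).aemeasurable aemeasurable_const
          (by norm_num) (by norm_num) (by norm_num)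
    _ ≤ (∫⁻ x, f x ∂μ) ^ (1 / 2 : ℝ) * μ univ ^ (1 / 2 : ℝ) := by
        rw [lintegral_one]
        gcongr
        exact hφ_sq _

theorem ENNReal.one_div_rpow_mul_rpow_le_one (c : ℝ≥0∞) (p : ℝ) : (1 / c) ^ p * c ^ p ≤ 1 := by
  rw [one_div, ENNReal.inv_rpow]
  exact ENNReal.inv_mul_le_one _

theorem measurableSet_cone (n : ℕ) (x : EuclideanSpace ℝ (Fin n)) : MeasurableSet (cone n x) :=
  measurableSet_lt (continuous_const.dist continuous_fst).measurable measurable_snd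

theorem disjoint_cone_tent {n : ℕ} {x : EuclideanSpace ℝ (Fin n)}
    {E : Set (EuclideanSpace ℝ (Fin n))} (hx : x ∉ E) : Disjoint (cone n x) (tent n E) :=
  disjoint_left.2 fun _ hcone htent ↦ hx (htent.2 (mem_ball.2 hcone))

theorem setLIntegral_cone_eq_zero {n : ℕ} {E : Set (EuclideanSpace ℝ (Fin n))}
    {f : EuclideanSpace ℝ (Fin n) × ℝ → ℝ≥0∞} (hf : ∀ p ∉ tent n E, f p = 0)
    (μ : Measure (EuclideanSpace ℝ (Fin n) × ℝ)) {x : EuclideanSpace ℝ (Fin n)} (hx : x ∉ E) :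
    ∫⁻ p in cone n x, f p ∂μ = 0 :=
  (setLIntegral_congr_fun (measurableSet_cone n x) fun p hp ↦
    hf p (disjoint_left.1 (disjoint_cone_tent hx) hp)).trans lintegral_zero

theorem atom_norm_le_one_general (n : ℕ) (H : Type*) [NormedAddCommGroup H]
    (a : EuclideanSpace ℝ (Fin n) × ℝ → H)
    (xB : EuclideanSpace ℝ (Fin n)) (rB : ℝ)
    (hsupp : ∀ p ∉ tent n (Metric.ball xB rB), a p = 0)
    (hbound : (∫⁻ x in Metric.ball xB rB, ∫⁻ p in cone n x, (‖a p‖₊ : ℝ≥0∞) ^ 2 ∂muT n)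
      ≤ 1 / volume (Metric.ball xB rB)) :
    (∫⁻ x, (∫⁻ p in cone n x, (‖a p‖₊ : ℝ≥0∞) ^ 2 ∂muT n) ^ (1/2 : ℝ)) ≤ 1 := by
  set B := Metric.ball xB rB
  have hcone : ∀ x ∉ B, ∫⁻ p in cone n x, (‖a p‖₊ : ℝ≥0∞) ^ 2 ∂muT n = 0 := fun x hx ↦
    setLIntegral_cone_eq_zero (fun p hp ↦ by simp [hsupp p hp]) _ hx
  have hsupport : (fun x ↦ (∫⁻ p in cone n x, (‖a p‖₊ : ℝ≥0∞) ^ 2 ∂muT n) ^ (1/2 : ℝ)).support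
      ⊆ B :=
    Function.support_subset_iff'.2 fun x hx ↦ by simp [hcone x hx]
  rw [← setLIntegral_eq_of_support_subset hsupport]
  calc _ ≤ _ := lintegral_rpow_half_le _ _
    _ ≤ (1 / volume B) ^ (1/2 : ℝ) * volume B ^ (1/2 : ℝ) := by
        rw [Measure.restrict_apply_univ]
        gcongr
    _ ≤ 1 := ENNReal.one_div_rpow_mul_rpow_le_one _ _

/-- The `T¹(H)` norm of an atom is at most one (Hilbert-valued case). -/
theorem atom_norm_le_one (n : ℕ) (H : Type*) [NormedAddCommGroup H]
    [InnerProductSpace ℝ H] [CompleteSpace H] [TopologicalSpace.SeparableSpace H]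
    (a : EuclideanSpace ℝ (Fin n) × ℝ → H) (ha : StronglyMeasurable a)
    (xB : EuclideanSpace ℝ (Fin n)) (rB : ℝ) (hrB : 0 < rB)
    (hsupp : ∀ p ∉ tent n (Metric.ball xB rB), a p = 0)
    (hbound : (∫⁻ x in Metric.ball xB rB, ∫⁻ p in cone n x, (‖a p‖₊ : ℝ≥0∞) ^ 2 ∂muT n)
      ≤ 1 / volume (Metric.ball xB rB)) :
    (∫⁻ x, (∫⁻ p in cone n x, (‖a p‖₊ : ℝ≥0∞) ^ 2 ∂muT n) ^ (1/2 : ℝ)) ≤ 1 :=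
  atom_norm_le_one_general n H a xB rB hsupp hbound
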